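/- arXiv:1511.05931 — 6 statements merged into one kernel-verified Lean document; each statement's English description precedes it below -/
import Mathlib

section
/- A Boolean function f : (Fin n → Bool) → Bool is monotone if and only if it is expressible as a term built from the variables using only conjunction and disjunction, together with the constants true and false. -/
/-- Syntactic terms built from variables, conjunction, disjunction, and the
constants true and false. -/
inductive MonoTerm (n : ℕ) : Type
  | var (i : Fin n) : MonoTerm n
  | tru : MonoTerm n
  | fls : MonoTerm n
  | and (s t : MonoTerm n) : MonoTerm n
  | or  (s t : MonoTerm n) : MonoTerm n

/-- Evaluation of such a term at a Boolean tuple. -/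
def MonoTerm.eval {n : ℕ} (t : MonoTerm n) (a : Fin n → Bool) : Bool :=
  match t with
  | .var i => a i
  | .tru => true
  | .fls => false
  | .and s t => s.eval a && t.eval a
  | .or s t => s.eval a || t.eval a

/-!
A monotone `f` is the disjunction, over the points `a` with `f a`, of the conjunction of the
variables that are true at `a`: that conjunction holds at `b` exactly when `a ≤ b`, and by
monotonicity some `a ≤ b` has `f a` exactly when `f b`.
-/

namespace MonoTerm

variable {n : ℕ}

theorem eval_monotone (t : MonoTerm n) : Monotone t.eval := by
  induction t with
  | var i => exact fun _ _ h => h i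
  | tru => exact monotone_const
  | fls => exact monotone_const
  | and s t hs ht => exact hs.inf ht
  | or s t hs ht => exact hs.sup ht

def bigAnd : List (MonoTerm n) → MonoTerm n
  | [] => .tru
  | t :: ts => .and t (bigAnd ts)

def bigOr : List (MonoTerm n) → MonoTerm n
  | [] => .fls
  | t :: ts => .or t (bigOr ts)

@[simp]
theorem eval_bigAnd (l : List (MonoTerm n)) (a : Fin n → Bool) :
    (bigAnd l).eval a = l.all (·.eval a) := by
  induction l with
  | nil => rfl
  | cons t ts ih => simp [bigAnd, eval, ih]

@[simp]
theorem eval_bigOr (l : List (MonoTerm n)) (a : Fin n → Bool) :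
    (bigOr l).eval a = l.any (·.eval a) := by
  induction l with
  | nil => rfl
  | cons t ts ih => simp [bigOr, eval, ih]

def minterm (a : Fin n → Bool) : MonoTerm n :=
  bigAnd (((List.finRange n).filter a).map var)

theorem eval_minterm (a b : Fin n → Bool) : (minterm a).eval b = true ↔ a ≤ b := by
  simp only [minterm, eval_bigAnd, List.all_map, List.all_filter, List.all_eq_true,
    List.mem_finRange, true_implies, Function.comp_apply, eval, Pi.le_def]
  exact forall_congr' fun i => by cases a i <;> cases b i <;> decide

noncomputable def ofFun (f : (Fin n → Bool) → Bool) : MonoTerm n :=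
  bigOr ((Finset.univ.toList.filter f).map minterm)

theorem eval_ofFun {f : (Fin n → Bool) → Bool} (hf : Monotone f) : (ofFun f).eval = f := by
  funext b
  rw [Bool.eq_iff_iff]
  simp only [ofFun, eval_bigOr, List.any_map, List.any_eq_true, List.mem_filter,
    Finset.mem_toList, Finset.mem_univ, true_and, Function.comp_apply, eval_minterm]
  exact ⟨fun ⟨a, hfa, hab⟩ => le_antisymm (Bool.le_true _) (hfa ▸ hf hab),
    fun hfb => ⟨b, hfb, le_rfl⟩⟩

theorem monotone_iff_exists_eval_eq (f : (Fin n → Bool) → Bool) :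
    Monotone f ↔ ∃ t : MonoTerm n, t.eval = f :=
  ⟨fun hf => ⟨ofFun f, eval_ofFun hf⟩, fun ⟨t, ht⟩ => ht ▸ t.eval_monotone⟩

end MonoTerm

/-- A Boolean function is monotone iff it is expressible by a term
built from variables using only ∧, ∨ and the constants true, false. -/
theorem monotone_iff_and_or_expressible {n : ℕ} (f : (Fin n → Bool) → Bool) :
    (∀ a b : Fin n → Bool, (∀ i, a i ≤ b i) → f a ≤ f b) ↔
      ∃ t : MonoTerm n, ∀ a : Fin n → Bool, t.eval a = f a :=
  (MonoTerm.monotone_iff_exists_eval_eq f).trans (exists_congr fun _ => funext_iff)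
end

section
/- Every Boolean function f that is neither monotone nor anti-monotone (a 'rest function') is a TFT-function or an FTF-function. -/
/-- Strict pointwise order on Boolean tuples. -/
def TupLT {n : ℕ} (a b : Fin n → Bool) : Prop :=
  (∀ i, a i ≤ b i) ∧ a ≠ b

/-- Every rest function (neither monotone nor anti-monotone) is a
TFT-function or an FTF-function. -/
theorem rest_function_TFT_or_FTF {n : ℕ} (f : (Fin n → Bool) → Bool)
    (hnotmono : ¬ ∀ a b : Fin n → Bool, (∀ i, a i ≤ b i) → f a ≤ f b)
    (hnotanti : ¬ ∀ a b : Fin n → Bool, (∀ i, a i ≤ b i) → f b ≤ f a) :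
    (∃ a b c : Fin n → Bool, TupLT a b ∧ TupLT b c ∧
        f a = true ∧ f b = false ∧ f c = true) ∨
    (∃ a b c : Fin n → Bool, TupLT a b ∧ TupLT b c ∧
        f a = false ∧ f b = true ∧ f c = false) := by
  push_neg at hnotmono hnotanti
  obtain ⟨p, q, hpq, hfpq⟩ := hnotmono
  obtain ⟨r, s, hrs, hfrs⟩ := hnotanti
  have hp : f p = true := by
    cases h : f p
    · rw [h] at hfpq; exact absurd (Bool.false_le _) hfpq.not_ge
    · rfl
  have hq : f q = false := by
    cases h : f q
    · rfl
    · rw [h] at hfpq; exact absurd (Bool.le_true _) hfpq.not_ge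
  have hr : f r = false := by
    cases h : f r
    · rfl
    · rw [h] at hfrs; exact absurd (Bool.le_true _) hfrs.not_ge
  have hs : f s = true := by
    cases h : f s
    · rw [h] at hfrs; exact absurd (Bool.false_le _) hfrs.not_ge
    · rfl
  have hpqne : p ≠ q := fun h => by rw [h, hq] at hp; exact Bool.noConfusion hp
  have hrsne : r ≠ s := fun h => by rw [h, hs] at hr; exact Bool.noConfusion hr
  cases hbot : f (fun _ => false) <;> cases htop : f (fun _ => true)
  · -- bot false, top false : FTF with ⊥ < p < q
    refine Or.inr ⟨(fun _ => false), p, q,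
      ⟨fun i => Bool.false_le _, fun h => by rw [← h, hbot] at hp; exact Bool.noConfusion hp⟩,
      ⟨hpq, hpqne⟩, hbot, hp, hq⟩
  · -- bot false, top true : TFT with p < q < ⊤
    refine Or.inl ⟨p, q, (fun _ => true), ⟨hpq, hpqne⟩,
      ⟨fun i => Bool.le_true _, fun h => by rw [h, htop] at hq; exact Bool.noConfusion hq⟩,
      hp, hq, htop⟩
  · -- bot true, top false : TFT with ⊥ < r < s
    refine Or.inl ⟨(fun _ => false), r, s,
      ⟨fun i => Bool.false_le _, fun h => by rw [← h, hbot] at hr; exact Bool.noConfusion hr⟩,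
      ⟨hrs, hrsne⟩, hbot, hr, hs⟩
  · -- bot true, top true : TFT with ⊥ < q < ⊤
    refine Or.inl ⟨(fun _ => false), q, (fun _ => true),
      ⟨fun i => Bool.false_le _, fun h => by rw [← h, hbot] at hq; exact Bool.noConfusion hq⟩,
      ⟨fun i => Bool.le_true _, fun h => by rw [h, htop] at hq; exact Bool.noConfusion hq⟩,
      hbot, hq, htop⟩
end

section
/- If f is a Boolean function that is a TFT-function, then there exist substitutions A_1,...,A_n, each drawn from {p1, p2, p1 ∨ p2, ⊥, ⊤}, such that the function (p1,p2) ↦ f(A_1,...,A_n) equals the function (p1,p2) ↦ (p1 → p2). -/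
def chainSubst (x y z : Bool) : Bool → Bool → Bool :=
  if x then fun _ _ => true
  else if z then (if y then fun p q => p || q else fun _ q => q)
  else fun _ _ => false

theorem chainSubst_mem (x y z : Bool) :
    chainSubst x y z ∈ ({(fun p _ => p), (fun _ q => q), (fun p q => p || q),
      (fun _ _ => false), (fun _ _ => true)} : Set (Bool → Bool → Bool)) := by
  unfold chainSubst
  split_ifs <;> simp

theorem chainSubst_apply {x y z : Bool} (hxy : x ≤ y) (hyz : y ≤ z) (p q : Bool) :
    chainSubst x y z p q = if q then z else if p then y else x := by
  revert x y z p q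
  decide

theorem chainSubst_apply_pi {ι : Type*} {a b c : ι → Bool} (hab : a ≤ b) (hbc : b ≤ c) (p q : Bool) :
    (fun i => chainSubst (a i) (b i) (c i) p q) = if q then c else if p then b else a := by
  funext i
  simp only [chainSubst_apply (hab i) (hbc i), ite_apply]

/-- If f is a TFT-function, then substituting suitable binary
functions from {p1, p2, p1 ∨ p2, ⊥, ⊤} for its arguments yields implication. -/
theorem TFT_yields_implication {n : ℕ} (f : (Fin n → Bool) → Bool)
    (hTFT : ∃ a b c : Fin n → Bool, TupLT a b ∧ TupLT b c ∧
        f a = true ∧ f b = false ∧ f c = true) :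
    ∃ A : Fin n → (Bool → Bool → Bool),
      (∀ i, A i ∈ ({(fun p _ => p), (fun _ q => q), (fun p q => p || q),
                    (fun _ _ => false), (fun _ _ => true)} :
                    Set (Bool → Bool → Bool))) ∧
      ∀ p q : Bool, f (fun i => A i p q) = (!p || q) := by
  obtain ⟨a, b, c, ⟨hab, -⟩, ⟨hbc, -⟩, hfa, hfb, hfc⟩ := hTFT
  refine ⟨fun i => chainSubst (a i) (b i) (c i), fun i => chainSubst_mem _ _ _, fun p q => ?_⟩
  rw [chainSubst_apply_pi hab hbc]
  cases p <;> cases q <;> simp [hfa, hfb, hfc]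
end

section
/- If f is a rest Boolean function (neither monotone nor anti-monotone), then there exist substitutions B_1,...,B_n ∈ {p1, ⊥, ⊤} making f(B_1,...,B_n) equal to the identity p1 ↦ p1, and substitutions C_1,...,C_n ∈ {p1, ⊥, ⊤} making f(C_1,...,C_n) equal to negation p1 ↦ ¬p1. -/
/-!
If `a ≤ b` pointwise, the substitution `B i := fun p => cond p (b i) (a i)` takes each variable to
`p`, `⊥` or `⊤` (the constant ones where `a i = b i`), and `f ∘ B` maps `false ↦ f a`, `true ↦ f b`.
A witness `a ≤ b` of non-monotonicity has `f a = ⊤`, `f b = ⊥` and so yields negation; a witness of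
non-anti-monotonicity yields the identity.
-/

def unarySubsts : Set (Bool → Bool) := {fun p => p, fun _ => false, fun _ => true}

lemma cond_mem_unarySubsts {x y : Bool} (h : x ≤ y) : (fun p => cond p y x) ∈ unarySubsts := by
  cases x <;> cases y
  · exact .inr (.inl (funext fun p => by cases p <;> rfl))
  · exact .inl (funext fun p => by cases p <;> rfl)
  · exact absurd h (by decide)
  · exact .inr (.inr (funext fun p => by cases p <;> rfl))

lemma exists_subst_eq_cond {ι : Type*} (f : (ι → Bool) → Bool) {a b : ι → Bool} (hab : a ≤ b) :
    ∃ B : ι → Bool → Bool, (∀ i, B i ∈ unarySubsts) ∧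
      ∀ p, f (fun i => B i p) = cond p (f b) (f a) :=
  ⟨fun i p => cond p (b i) (a i), fun i => cond_mem_unarySubsts (hab i), fun p => by cases p <;> rfl⟩

/-- If f is a rest function (neither monotone nor anti-monotone),
then substituting unary functions from {p1, ⊥, ⊤} can produce both the identity
and negation. -/
theorem rest_yields_id_and_not {n : ℕ} (f : (Fin n → Bool) → Bool)
    (hnotmono : ¬ ∀ a b : Fin n → Bool, (∀ i, a i ≤ b i) → f a ≤ f b)
    (hnotanti : ¬ ∀ a b : Fin n → Bool, (∀ i, a i ≤ b i) → f b ≤ f a) :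
    (∃ B : Fin n → (Bool → Bool),
      (∀ i, B i ∈ ({(fun p => p), (fun _ => false), (fun _ => true)} :
                    Set (Bool → Bool))) ∧
      ∀ p : Bool, f (fun i => B i p) = p) ∧
    (∃ C : Fin n → (Bool → Bool),
      (∀ i, C i ∈ ({(fun p => p), (fun _ => false), (fun _ => true)} :
                    Set (Bool → Bool))) ∧
      ∀ p : Bool, f (fun i => C i p) = !p) := by
  push Not at hnotmono hnotanti
  obtain ⟨a, b, hab, hfba⟩ := hnotmono
  obtain ⟨c, d, hcd, hfcd⟩ := hnotanti
  obtain ⟨hfb, hfa⟩ := Bool.lt_iff.mp hfba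
  obtain ⟨hfc, hfd⟩ := Bool.lt_iff.mp hfcd
  obtain ⟨B, hB, hfB⟩ := exists_subst_eq_cond f hcd
  obtain ⟨C, hC, hfC⟩ := exists_subst_eq_cond f hab
  refine ⟨⟨B, hB, fun p => ?_⟩, ⟨C, hC, fun p => ?_⟩⟩
  · rw [hfB, hfc, hfd]; cases p <;> rfl
  · rw [hfC, hfa, hfb]; cases p <;> rfl
end

section
/- Every non-constant Boolean function f that is not an FTF-function can be written as a disjunction of terms, where each term is either a conjunction of (unnegated) variables or a conjunction of negated variables, with at least one term. -/
/-!
If `f b = true`, the absence of a false–true–false chain through `b` forces `f` to be true on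
the whole up-set or on the whole down-set of `b`. So `f` is the disjunction of the monotone terms
`⋀_{b i} x_i` (true exactly on the up-set of `b`) over the true points `b` of the first kind and
of the antitone terms `⋀_{¬ b i} ¬x_i` over those of the second kind. A false point of `f` keeps
every such term nonempty, and a true point supplies at least one of them.
-/

section PartialOrder

variable {α : Type*} [PartialOrder α] {f : α → Bool}

theorem forall_ge_or_forall_le_of_not_false_true_false
    (hf : ¬ ∃ a b c : α, a < b ∧ b < c ∧ f a = false ∧ f b = true ∧ f c = false)
    {b : α} (hb : f b = true) :
    (∀ c, b ≤ c → f c = true) ∨ ∀ a, a ≤ b → f a = true := by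
  by_contra! ⟨⟨c, hbc, hc⟩, ⟨a, hab, ha⟩⟩
  simp only [ne_eq, Bool.not_eq_true] at ha hc
  exact hf ⟨a, b, c, hab.lt_of_ne (ne_of_apply_ne f (by simp [ha, hb])),
    hbc.lt_of_ne (ne_of_apply_ne f (by simp [hb, hc])), ha, hb, hc⟩

theorem eq_true_iff_of_not_false_true_false
    (hf : ¬ ∃ a b c : α, a < b ∧ b < c ∧ f a = false ∧ f b = true ∧ f c = false) (a : α) :
    f a = true ↔
      (∃ b, (∀ c, b ≤ c → f c = true) ∧ b ≤ a) ∨ ∃ b, (∀ c, c ≤ b → f c = true) ∧ a ≤ b := by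
  refine ⟨fun ha => ?_, ?_⟩
  · exact (forall_ge_or_forall_le_of_not_false_true_false hf ha).imp
      (fun h => ⟨a, h, le_rfl⟩) (fun h => ⟨a, h, le_rfl⟩)
  · rintro (⟨b, hb, hba⟩ | ⟨b, hb, hab⟩)
    exacts [hb a hba, hb a hab]

end PartialOrder

section BoolTuples

variable {n : ℕ}

theorem tupLT_iff_lt {a b : Fin n → Bool} : TupLT a b ↔ a < b :=
  (lt_iff_le_and_ne (a := a) (b := b)).symm

def trueCoords (b : Fin n → Bool) : List (Fin n) :=
  (List.finRange n).filter (b ·)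

def falseCoords (b : Fin n → Bool) : List (Fin n) :=
  (List.finRange n).filter (fun i => !b i)

theorem forall_mem_trueCoords_iff {a b : Fin n → Bool} :
    (∀ i ∈ trueCoords b, a i = true) ↔ b ≤ a := by
  simp only [trueCoords, List.mem_filter, List.mem_finRange, true_and, Pi.le_def]
  exact forall_congr' fun i => by cases a i <;> cases b i <;> decide

theorem forall_mem_falseCoords_iff {a b : Fin n → Bool} :
    (∀ i ∈ falseCoords b, a i = false) ↔ a ≤ b := by
  simp only [falseCoords, List.mem_filter, List.mem_finRange, true_and, Pi.le_def]
  exact forall_congr' fun i => by cases a i <;> cases b i <;> decide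

theorem trueCoords_ne_nil_of_not_le {a b : Fin n → Bool} (h : ¬ b ≤ a) : trueCoords b ≠ [] :=
  fun hb => h (forall_mem_trueCoords_iff.1 (by simp [hb]))

theorem falseCoords_ne_nil_of_not_le {a b : Fin n → Bool} (h : ¬ a ≤ b) : falseCoords b ≠ [] :=
  fun hb => h (forall_mem_falseCoords_iff.1 (by simp [hb]))

end BoolTuples

/-- Every non-constant Boolean function that is not an FTF-function
is a disjunction of terms, each a nonempty conjunction of variables or a nonempty
conjunction of negated variables, with at least one term. -/
theorem nonFTF_DNF {n : ℕ} (f : (Fin n → Bool) → Bool)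
    (hnc : ∃ a b : Fin n → Bool, f a ≠ f b)
    (hnFTF : ¬ ∃ a b c : Fin n → Bool, TupLT a b ∧ TupLT b c ∧
        f a = false ∧ f b = true ∧ f c = false) :
    ∃ (k m : ℕ) (P : Fin k → List (Fin n)) (Q : Fin m → List (Fin n)),
      k + m > 0 ∧
      (∀ g, P g ≠ []) ∧ (∀ h, Q h ≠ []) ∧
      ∀ a : Fin n → Bool,
        f a = true ↔
          ((∃ g, ∀ i ∈ P g, a i = true) ∨ (∃ h, ∀ i ∈ Q h, a i = false)) := by
  classical
  simp only [tupLT_iff_lt] at hnFTF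
  obtain ⟨z₀, z₁, hz₀, hz₁⟩ : ∃ z₀ z₁, f z₀ = false ∧ f z₁ = true := by
    obtain ⟨a, b, hab⟩ := hnc
    cases ha : f a
    exacts [⟨a, b, ha, by simp_all⟩, ⟨b, a, by simp_all, ha⟩]
  let U := {b // ∀ c, b ≤ c → f c = true}
  let D := {b // ∀ c, c ≤ b → f c = true}
  let eU := Fintype.equivFin U
  let eD := Fintype.equivFin D
  refine ⟨Fintype.card U, Fintype.card D, fun g => trueCoords (eU.symm g).1,
    fun h => falseCoords (eD.symm h).1, ?_, fun g => ?_, fun h => ?_, fun a => ?_⟩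
  · rcases forall_ge_or_forall_le_of_not_false_true_false hnFTF hz₁ with h | h
    · have : 0 < Fintype.card U := Fintype.card_pos_iff.2 ⟨⟨z₁, h⟩⟩
      omega
    · have : 0 < Fintype.card D := Fintype.card_pos_iff.2 ⟨⟨z₁, h⟩⟩
      omega
  · exact trueCoords_ne_nil_of_not_le (a := z₀) fun h => by simp [(eU.symm g).2 z₀ h] at hz₀
  · exact falseCoords_ne_nil_of_not_le (a := z₀) fun h' => by simp [(eD.symm h).2 z₀ h'] at hz₀
  · simp only [forall_mem_trueCoords_iff, forall_mem_falseCoords_iff]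
    rw [← eU.symm.surjective.exists (p := fun b => b.1 ≤ a),
      ← eD.symm.surjective.exists (p := fun b => a ≤ b.1)]
    simp only [U, D, Subtype.exists, exists_prop]
    exact eq_true_iff_of_not_false_true_false hnFTF a
end

section
/- If predicates ψ_1,...,ψ_n on two models are invariant with respect to a relation A, and f is a non-constant anti-monotone Boolean function, then f(ψ_1,...,ψ_n) is invariant with respect to the inverse relation A⁻¹. -/
theorem Antitone.apply_eq_true_of_forall_imp {ι : Type*} {f : (ι → Bool) → Bool}
    (hf : Antitone f) {a b : ι → Bool} (hba : ∀ i, b i = true → a i = true)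
    (ha : f a = true) : f b = true :=
  Bool.le_iff_imp.1 (hf fun i => Bool.le_iff_imp.2 (hba i)) ha

theorem antimonotone_combination_invariant_inverse_general {U₁ U₂ : Type*} {n : ℕ}
    (A₁₂ : U₁ → U₂ → Prop) (A₂₁ : U₂ → U₁ → Prop)
    (ψ₁ : Fin n → U₁ → Bool) (ψ₂ : Fin n → U₂ → Bool)
    (f : (Fin n → Bool) → Bool)
    (hanti : ∀ a b : Fin n → Bool, (∀ i, a i ≤ b i) → f b ≤ f a)
    -- invariance of each ψᵢ w.r.t. A
    (hinvA₁ : ∀ i u v, A₁₂ u v → ψ₁ i u = true → ψ₂ i v = true)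
    (hinvA₂ : ∀ i v u, A₂₁ v u → ψ₂ i v = true → ψ₁ i u = true) :
    -- invariance of f(ψ₁,…,ψₙ) w.r.t. A⁻¹
    (∀ u v, A₂₁ v u →
        f (fun i => ψ₁ i u) = true → f (fun i => ψ₂ i v) = true) ∧
    (∀ v u, A₁₂ u v →
        f (fun i => ψ₂ i v) = true → f (fun i => ψ₁ i u) = true) := by
  have hf : Antitone f := fun a b => hanti a b
  exact ⟨fun u v h => hf.apply_eq_true_of_forall_imp (hinvA₂ · v u h),
    fun v u h => hf.apply_eq_true_of_forall_imp (hinvA₁ · u v h)⟩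

/-- If the predicates ψᵢ are invariant with respect to A and f is
a non-constant anti-monotone Boolean function, then f(ψ₁,…,ψₙ) is invariant
with respect to the inverse relation A⁻¹. -/
theorem antimonotone_combination_invariant_inverse {U₁ U₂ : Type*} {n : ℕ}
    (A₁₂ : U₁ → U₂ → Prop) (A₂₁ : U₂ → U₁ → Prop)
    (ψ₁ : Fin n → U₁ → Bool) (ψ₂ : Fin n → U₂ → Bool)
    (f : (Fin n → Bool) → Bool)
    (hanti : ∀ a b : Fin n → Bool, (∀ i, a i ≤ b i) → f b ≤ f a)
    (hnc : ∃ a b : Fin n → Bool, f a ≠ f b)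
    -- invariance of each ψᵢ w.r.t. A
    (hinvA₁ : ∀ i u v, A₁₂ u v → ψ₁ i u = true → ψ₂ i v = true)
    (hinvA₂ : ∀ i v u, A₂₁ v u → ψ₂ i v = true → ψ₁ i u = true) :
    -- invariance of f(ψ₁,…,ψₙ) w.r.t. A⁻¹
    (∀ u v, A₂₁ v u →
        f (fun i => ψ₁ i u) = true → f (fun i => ψ₂ i v) = true) ∧
    (∀ v u, A₁₂ u v →
        f (fun i => ψ₂ i v) = true → f (fun i => ψ₁ i u) = true) :=
  antimonotone_combination_invariant_inverse_general A₁₂ A₂₁ ψ₁ ψ₂ f hanti hinvA₁ hinvA₂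
end
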